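/- arXiv:2602.04576 — 6 statements merged into one kernel-verified Lean document; each statement's English description precedes it below -/
import Mathlib

section
/- Let R be a commutative ring and A ∈ M_n(R) such that R^n is a cyclic R[t]-module under the action of A (with cyclic vector v). Then any B ∈ M_n(R) commuting with A is a polynomial in A with coefficients in R. -/
/-!
Every vector is `p(A) v` for some polynomial `p`; in particular `B v = p(A) v`. Two endomorphisms
commuting with `A` that agree on the cyclic vector `v` agree on every `A^k v`, hence everywhere,
so `B = p(A)`.
-/

open Polynomial

namespace Module.End

variable {R M : Type*} [CommRing R] [AddCommGroup M] [Module R M] {f g h : Module.End R M} {v : M}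

theorem eq_of_commute_of_apply_eq (hv : Submodule.span R (Set.range fun k : ℕ => (f ^ k) v) = ⊤)
    (hg : Commute f g) (hh : Commute f h) (hgh : g v = h v) : g = h := by
  refine LinearMap.ext_on hv ?_
  rintro _ ⟨k, rfl⟩
  calc g ((f ^ k) v) = (f ^ k) (g v) := LinearMap.congr_fun (hg.pow_left k).eq.symm v
    _ = (f ^ k) (h v) := by rw [hgh]
    _ = h ((f ^ k) v) := LinearMap.congr_fun (hh.pow_left k).eq v

theorem exists_aeval_apply_eq (hv : Submodule.span R (Set.range fun k : ℕ => (f ^ k) v) = ⊤)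
    (x : M) : ∃ p : R[X], aeval f p v = x := by
  have hle : Submodule.span R (Set.range fun k : ℕ => (f ^ k) v) ≤
      LinearMap.range (LinearMap.applyₗ v ∘ₗ (aeval f).toLinearMap) := by
    rw [Submodule.span_le]
    rintro _ ⟨k, rfl⟩
    exact ⟨X ^ k, by simp⟩
  simpa using hle (hv ▸ Submodule.mem_top : x ∈ _)

theorem exists_aeval_eq_of_commute (hv : Submodule.span R (Set.range fun k : ℕ => (f ^ k) v) = ⊤)
    (hg : Commute f g) : ∃ p : R[X], aeval f p = g := by
  obtain ⟨p, hp⟩ := exists_aeval_apply_eq hv (g v)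
  have hfp : Commute f (aeval f p) := by simpa using (Commute.all X p).map (aeval f)
  exact ⟨p, eq_of_commute_of_apply_eq hv hfp hg hp⟩

end Module.End

theorem stmt_4 (R : Type*) [CommRing R] (n : ℕ) (A : Matrix (Fin n) (Fin n) R)
    (v : Fin n → R)
    (hcyc : Submodule.span R (Set.range fun i : Fin n => (A ^ (i : ℕ)).mulVec v) = ⊤) :
    ∀ B : Matrix (Fin n) (Fin n) R,
      A * B = B * A → ∃ p : Polynomial R, Polynomial.aeval A p = B := by
  intro B hAB
  let φ := Matrix.toLinAlgEquiv' (R := R) (n := Fin n)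
  have hv : Submodule.span R (Set.range fun k : ℕ => (φ A ^ k) v) = ⊤ := by
    refine top_unique (hcyc ▸ Submodule.span_mono ?_)
    rintro _ ⟨i, rfl⟩
    exact ⟨i, by simp [φ, ← map_pow]⟩
  obtain ⟨p, hp⟩ := Module.End.exists_aeval_eq_of_commute hv (Commute.map hAB φ)
  exact ⟨p, φ.injective (by rw [← aeval_algHom_apply, hp])⟩
end

section
/- Let O be a local ring with maximal ideal m satisfying m² = 0, residue field k of characteristic ≠ 2. Let A ∈ M_n(O) be such that its reduction Ā ∈ M_n(k) is cyclic, and let F ∈ O[t] be monic. Suppose B̃ ∈ M_n(k) satisfies F̄(B̃) = Ā and F̄'(B̃) ∈ GL_n(k), where F̄ is the reduction of F and F̄' its formal derivative. Then there exists B ∈ M_n(O) with reduction B̃ such that F(B) = A. -/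
open IsLocalRing Polynomial Module DirectSum

-- L2: reduction commutes with matrix polynomial evaluation
lemma map_aeval_matrix {R S : Type*} [CommRing R] [CommRing S] (f : R →+* S) {n : ℕ}
    (A : Matrix (Fin n) (Fin n) R) (p : R[X]) :
    (aeval A p).map f = aeval (A.map f) (p.map f) := by
  have h1 : (aeval A p).map f = f.mapMatrix (aeval A p) := rfl
  have h2 : A.map f = f.mapMatrix A := rfl
  rw [h1, h2, aeval_def, aeval_def, hom_eval₂, eval₂_map]
  congr 1
  refine RingHom.ext fun r => ?_
  show f.mapMatrix (algebraMap R _ r) = algebraMap S _ (f r)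
  simp only [RingHom.mapMatrix_apply, Matrix.algebraMap_eq_diagonal]
  ext i j
  rcases eq_or_ne i j with h | h <;>
    simp [Matrix.diagonal_apply, h, Pi.algebraMap_apply]

-- L1: product of two matrices with entries in an ideal of square zero
lemma mul_eq_zero_of_mem {O : Type*} [CommRing O] (I : Ideal O) (hI : I ^ 2 = ⊥) {n : ℕ}
    (X Y : Matrix (Fin n) (Fin n) O) (hX : ∀ i j, X i j ∈ I) (hY : ∀ i j, Y i j ∈ I) :
    X * Y = 0 := by
  ext i j
  rw [Matrix.mul_apply]
  have : ∀ l, X i l * Y l j = 0 := by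
    intro l
    have h : X i l * Y l j ∈ I ^ 2 := by
      rw [pow_two]; exact Ideal.mul_mem_mul (hX i l) (hY l j)
    rw [hI] at h
    exact Ideal.mem_bot.mp h
  simp [this]

lemma pow_add_sq_zero {A : Type*} [Ring A] {a b : A} (hc : Commute a b) (hb : b * b = 0) :
    ∀ j : ℕ, (a + b) ^ j = a ^ j + j • (a ^ (j - 1) * b) := by
  intro j
  induction j with
  | zero => simp
  | succ j ih =>
    have hba : b * a = a * b := hc.symm.eq
    match j, ih with
    | 0, _ => simp
    | (j' + 1), ih =>
      have h2 : (j' + 1 : ℕ) - 1 = j' := rfl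
      rw [pow_succ, ih, h2]
      have h3 : a ^ j' * b * a = a ^ (j' + 1) * b := by
        rw [mul_assoc, hba, ← mul_assoc, ← pow_succ]
      have h4 : a ^ j' * b * b = 0 := by rw [mul_assoc, hb, mul_zero]
      rw [add_mul, mul_add, mul_add, smul_mul_assoc, smul_mul_assoc, h3, h4, smul_zero,
        add_zero, ← pow_succ, show (j' + 1 + 1 : ℕ) - 1 = j' + 1 from rfl]
      simp only [succ_nsmul]
      abel

lemma aeval_add_sq_zero {R A : Type*} [CommRing R] [Ring A] [Algebra R A] {a b : A}
    (hc : Commute a b) (hb : b * b = 0) (F : R[X]) :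
    aeval (a + b) F = aeval a F + aeval a (derivative F) * b := by
  induction F using Polynomial.induction_on' with
  | add p q hp hq =>
    rw [derivative_add, map_add, map_add, map_add, hp, hq, add_mul]; abel
  | monomial N c =>
    rw [derivative_monomial, aeval_monomial, aeval_monomial, aeval_monomial,
      pow_add_sq_zero hc hb, mul_add, map_mul, map_natCast, nsmul_eq_mul]
    simp [mul_assoc]

lemma exists_poly_inverse {k : Type*} [Field k] {n : ℕ} (M : Matrix (Fin n) (Fin n) k)
    (f : k[X]) (h : IsUnit (aeval M f)) : ∃ g : k[X], aeval M g * aeval M f = 1 := by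
  set U := aeval M f with hU
  set χ := U.charpoly with hχ
  set c₀ := χ.coeff 0 with hc₀
  have hdet : IsUnit U.det := (Matrix.isUnit_iff_isUnit_det U).mp h
  have hc0 : c₀ ≠ 0 := by
    intro h0
    have := Matrix.det_eq_sign_charpoly_coeff U
    rw [← hc₀, h0, mul_zero] at this
    rw [this] at hdet
    exact hdet.ne_zero rfl
  refine ⟨C (-c₀⁻¹) * (χ.divX.comp f), ?_⟩
  have key : aeval U χ.divX * U + algebraMap k _ c₀ = 0 := by
    have := Matrix.aeval_self_charpoly U
    rw [← hχ] at this
    calc aeval U χ.divX * U + algebraMap k _ c₀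
        = aeval U (χ.divX * X + C c₀) := by
          rw [map_add, map_mul, aeval_X, aeval_C]
      _ = 0 := by rw [χ.divX_mul_X_add, this]
  have key2 : aeval U χ.divX * U = algebraMap k _ (-c₀) := by
    rw [map_neg]; linear_combination (norm := noncomm_ring) key
  rw [map_mul, aeval_C, aeval_comp, ← hU, mul_assoc, key2, ← map_mul, neg_mul_neg,
    inv_mul_cancel₀ hc0, map_one]

lemma Commute.aeval_left' {R A : Type*} [CommRing R] [Ring A] [Algebra R A] {a b : A}
    (h : Commute a b) (q : R[X]) : Commute (aeval a q) b := by
  induction q using Polynomial.induction_on' with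
  | add p q hp hq => rw [map_add]; exact hp.add_left hq
  | monomial N c =>
    rw [aeval_monomial]
    exact Commute.mul_left (Algebra.commutes c b) (h.pow_left N)

universe u
lemma exists_generator_ann {k V : Type u} [Field k] [AddCommGroup V] [Module k V]
    [FiniteDimensional k V] (f : Module.End k V) :
    ∃ v : V, ∀ g : k[X], aeval f g v = 0 → aeval f g = 0 := by
  classical
  have hint : IsIntegral k f := Algebra.IsIntegral.isIntegral f
  have hμ : minpoly k f ≠ 0 := minpoly.ne_zero hint
  set N := Module.AEval' f with hN
  have hsmul : ∀ (g : k[X]) (x : N), g • x =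
      (Module.AEval.of k V f) (aeval f g ((Module.AEval.of k V f).symm x)) := by
    intro g x
    rfl
  have htor : Module.IsTorsion k[X] N := by
    intro x
    refine ⟨⟨minpoly k f, mem_nonZeroDivisors_of_ne_zero hμ⟩, ?_⟩
    show (minpoly k f) • x = 0
    rw [hsmul, minpoly.aeval]
    simp
  obtain ⟨ι, hfin, p, hp, e, ⟨l⟩⟩ := Module.equiv_directSum_of_isTorsion htor
  set Q := fun i : ι => (Submodule.span k[X] {p i ^ e i}) with hQ
  let w : ⨁ i, k[X] ⧸ Q i :=
    ∑ i, DirectSum.of (fun i => k[X] ⧸ Q i) i (Submodule.Quotient.mk 1)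
  have hw : ∀ i, w i = Submodule.Quotient.mk 1 := by
    intro i
    show (∑ j, DirectSum.of (fun i => k[X] ⧸ Q i) j (Submodule.Quotient.mk 1)) i = _
    rw [DFinsupp.finset_sum_apply]
    simp [DirectSum.of_apply]
  refine ⟨(Module.AEval.of k V f).symm (l.symm w), fun g hg => ?_⟩
  have hgv : g • (l.symm w) = 0 := by
    rw [hsmul, hg]
    exact map_zero _
  have hgw : g • w = 0 := by
    have := congrArg l hgv
    rwa [map_smul, LinearEquiv.apply_symm_apply, map_zero] at this
  have hmem : ∀ i, g ∈ Q i := by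
    intro i
    have h1 : (g • w) i = 0 := by rw [hgw]; rfl
    rw [DFinsupp.smul_apply, hw i] at h1
    rw [← Submodule.Quotient.mk_smul, smul_eq_mul, mul_one] at h1
    exact (Submodule.Quotient.mk_eq_zero _).mp h1
  have hkill : ∀ x : N, g • x = 0 := by
    intro x
    have h2 : g • l x = 0 := by
      refine DFinsupp.ext fun i => ?_
      rw [DFinsupp.smul_apply, DFinsupp.zero_apply]
      obtain ⟨r, hr⟩ := Submodule.Quotient.mk_surjective (Q i) (l x i)
      rw [← hr, ← Submodule.Quotient.mk_smul, Submodule.Quotient.mk_eq_zero]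
      rw [smul_eq_mul, mul_comm, ← smul_eq_mul]
      exact (Q i).smul_mem r (hmem i)
    have := congrArg l.symm h2
    rwa [map_smul, LinearEquiv.symm_apply_apply, map_zero] at this
  ext m
  have := hkill (Module.AEval.of k V f m)
  rw [hsmul] at this
  simpa using congrArg (Module.AEval.of k V f).symm this

lemma cyclic_commutant {k : Type u} [Field k] {n : ℕ} (M B : Matrix (Fin n) (Fin n) k)
    (hdeg : (minpoly k M).natDegree = n) (hMB : M * B = B * M) :
    ∃ c : k[X], aeval M c = B := by
  classical
  rcases Nat.eq_zero_or_pos n with hn | hn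
  · subst hn
    exact ⟨0, Subsingleton.elim _ _⟩
  let e : Matrix (Fin n) (Fin n) k ≃ₐ[k] Module.End k (Fin n → k) :=
    Matrix.toLinAlgEquiv' (R := k)
  set f := e M with hf
  set gB := e B with hgB
  have hmin : minpoly k f = minpoly k M := minpoly.algEquiv_eq e M
  have hcomm : Commute f gB := by
    show f * gB = gB * f
    rw [hf, hgB, ← map_mul, ← map_mul, hMB]
  obtain ⟨v, hv⟩ := exists_generator_ann f
  set P : (Fin n → k) → k[X] := fun c => ∑ i, C (c i) * X ^ (i : ℕ) with hP
  have ha : ∀ c : Fin n → k, aeval f (P c) v = ∑ i, c i • (f ^ (i : ℕ)) v := by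
    intro c
    rw [hP, map_sum, LinearMap.sum_apply]
    refine Finset.sum_congr rfl fun i _ => ?_
    rw [map_mul, aeval_C, aeval_X_pow, Module.End.mul_apply, Module.algebraMap_end_apply]
  have hdegP : ∀ c : Fin n → k, (P c).natDegree < n := by
    intro c
    refine lt_of_le_of_lt (Polynomial.natDegree_sum_le_of_forall_le _ _ fun i _ => ?_)
      (Nat.sub_lt hn one_pos)
    calc (C (c i) * X ^ (i : ℕ)).natDegree ≤ (i : ℕ) :=
          (Polynomial.natDegree_C_mul_le _ _).trans_eq (Polynomial.natDegree_X_pow _)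
      _ ≤ n - 1 := Nat.le_sub_one_of_lt i.isLt
  have hcoeff : ∀ c : Fin n → k, P c = 0 → c = 0 := by
    intro c hc
    funext j
    have : (P c).coeff (j : ℕ) = c j := by
      rw [hP, Polynomial.finset_sum_coeff]
      simp only [Polynomial.coeff_C_mul, Polynomial.coeff_X_pow]
      rw [Finset.sum_eq_single j (fun i _ hij => by
        simp [Fin.val_eq_val, (by simpa [eq_comm] using hij : ¬ (j = i))])
        (fun h => absurd (Finset.mem_univ j) h)]
      simp
    rw [hc] at this
    simpa using this.symm
  have hli : LinearIndependent k (fun i : Fin n => (f ^ (i : ℕ)) v) := by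
    rw [Fintype.linearIndependent_iff]
    intro c hc
    have h1 : aeval f (P c) v = 0 := by rw [ha]; exact hc
    have h2 : aeval f (P c) = 0 := hv _ h1
    have h3 : minpoly k f ∣ P c := minpoly.dvd k f h2
    have h4 : P c = 0 := by
      refine Polynomial.eq_zero_of_dvd_of_natDegree_lt h3 ?_
      rw [hmin, hdeg]
      exact hdegP c
    intro i
    have := hcoeff c h4
    rw [this]; rfl
  have hspan : Submodule.span k (Set.range fun i : Fin n => (f ^ (i : ℕ)) v) = ⊤ := by
    apply Submodule.eq_top_of_finrank_eq
    rw [finrank_span_eq_card hli]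
    simp [Module.finrank_pi]
  have hcyclic : ∀ x : Fin n → k, ∃ q : k[X], aeval f q v = x := by
    intro x
    have hx : x ∈ Submodule.span k (Set.range fun i : Fin n => (f ^ (i : ℕ)) v) := by
      rw [hspan]; trivial
    obtain ⟨c, hc⟩ := Submodule.mem_span_range_iff_exists_fun k |>.mp hx
    exact ⟨P c, by rw [ha]; exact hc⟩
  obtain ⟨q₀, hq₀⟩ := hcyclic (gB v)
  have hfinal : aeval f q₀ = gB := by
    apply LinearMap.ext
    intro x
    obtain ⟨q, hq⟩ := hcyclic x
    have c1 : aeval f q₀ x = aeval f q (aeval f q₀ v) := by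
      rw [← hq, ← Module.End.mul_apply, ← map_mul, mul_comm, map_mul, Module.End.mul_apply]
    have c2 : gB x = aeval f q (gB v) := by
      rw [← hq, ← Module.End.mul_apply, ← (hcomm.aeval_left' q).eq, Module.End.mul_apply]
    rw [c1, c2, hq₀]
  refine ⟨q₀, e.injective ?_⟩
  rw [← hgB, ← hfinal, hf]
  exact (Polynomial.aeval_algHom_apply e.toAlgHom M q₀).symm

lemma matrix_map_sub' {R S : Type*} [CommRing R] [CommRing S] (f : R →+* S) {n : ℕ}
    (X Y : Matrix (Fin n) (Fin n) R) : (X - Y).map f = X.map f - Y.map f := by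
  simpa [RingHom.mapMatrix_apply] using map_sub f.mapMatrix X Y

lemma matrix_map_add' {R S : Type*} [CommRing R] [CommRing S] (f : R →+* S) {n : ℕ}
    (X Y : Matrix (Fin n) (Fin n) R) : (X + Y).map f = X.map f + Y.map f := by
  simpa [RingHom.mapMatrix_apply] using map_add f.mapMatrix X Y

theorem stmt_8 (O : Type*) [CommRing O] [IsLocalRing O]
    (hm2 : (maximalIdeal O) ^ 2 = ⊥)
    (hchar : ringChar (ResidueField O) ≠ 2)
    (n : ℕ) (A : Matrix (Fin n) (Fin n) O)
    (hcyc : minpoly (ResidueField O) (A.map (residue O)) =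
      (A.map (residue O)).charpoly)
    (F : Polynomial O) (hF : F.Monic)
    (Btil : Matrix (Fin n) (Fin n) (ResidueField O))
    (hB1 : aeval Btil (F.map (residue O)) = A.map (residue O))
    (hB2 : IsUnit (aeval Btil (derivative (F.map (residue O))))) :
    ∃ B : Matrix (Fin n) (Fin n) O,
      B.map (residue O) = Btil ∧ aeval B F = A := by
  classical
  set res := residue O with hres
  set Abar := A.map res with hAbar
  set Fbar := F.map res with hFbar
  -- degree of the minimal polynomial
  have hdeg : (minpoly (ResidueField O) Abar).natDegree = n := by
    rw [hcyc, Matrix.charpoly_natDegree_eq_dim, Fintype.card_fin]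
  -- B̃ commutes with Ā
  have hABt : Abar * Btil = Btil * Abar := by
    rw [← hB1]
    exact ((Commute.refl Btil).aeval_left' Fbar).eq
  -- B̃ is a polynomial in Ā
  obtain ⟨pbar, hpbar⟩ := cyclic_commutant Abar Btil hdeg hABt
  -- polynomial inverse of F̄'(B̃)
  obtain ⟨Gbar, hGbar⟩ := exists_poly_inverse Btil (derivative Fbar) hB2
  -- lift the polynomials
  have hsurj : Function.Surjective res := Ideal.Quotient.mk_surjective
  obtain ⟨p, hp⟩ := Polynomial.map_surjective res hsurj pbar
  obtain ⟨G, hG⟩ := Polynomial.map_surjective res hsurj Gbar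
  -- the candidate
  set B₁ := aeval A p with hB₁
  set C := A - aeval A (F.comp p) with hC
  set E := aeval A ((G.comp p) * (X - F.comp p)) with hE
  -- auxiliary reduction facts
  have hB₁red : B₁.map res = Btil := by
    rw [hB₁, map_aeval_matrix, ← hAbar, hp, hpbar]
  have hCred : C.map res = 0 := by
    rw [hC, matrix_map_sub' res, map_aeval_matrix, ← hAbar, Polynomial.map_comp, hp, ← hFbar,
      aeval_comp, hpbar, hB1]
    exact sub_self _
  have hCm : ∀ i j, C i j ∈ maximalIdeal O := by
    intro i j
    have h0 : (C.map res) i j = 0 := by rw [hCred]; rfl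
    rw [Matrix.map_apply] at h0
    exact Ideal.Quotient.eq_zero_iff_mem.mp h0
  have hEeq : E = aeval A (G.comp p) * C := by
    rw [hE, map_mul, map_sub, aeval_X, hC]
  have hEm : ∀ i j, E i j ∈ maximalIdeal O := by
    intro i j
    rw [hEeq, Matrix.mul_apply]
    exact Ideal.sum_mem _ fun l _ => (maximalIdeal O).mul_mem_left _ (hCm l j)
  have hEred : E.map res = 0 := by
    ext i j
    rw [Matrix.map_apply, Matrix.zero_apply]
    exact Ideal.Quotient.eq_zero_iff_mem.mpr (hEm i j)
  refine ⟨B₁ + E, ?_, ?_⟩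
  · rw [matrix_map_add' res, hB₁red, hEred, add_zero]
  -- the main computation
  have hEE : E * E = 0 := mul_eq_zero_of_mem _ hm2 _ _ hEm hEm
  have hcommBE : Commute B₁ E := by
    show B₁ * E = E * B₁
    rw [hB₁, hE, ← map_mul, ← map_mul, mul_comm]
  rw [aeval_add_sq_zero hcommBE hEE F]
  -- identify U := F'(B₁) * G(B₁)
  have hB₁comp : ∀ q : Polynomial O, aeval B₁ q = aeval A (q.comp p) := fun q => by
    rw [aeval_comp, hB₁]
  set U := aeval A (((derivative F).comp p) * (G.comp p)) with hU
  have hstep : aeval B₁ (derivative F) * E = U * C := by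
    rw [hB₁comp, hEeq, ← mul_assoc, hU, map_mul]
  have hUred : (U - 1).map res = 0 := by
    rw [matrix_map_sub' res, hU, map_aeval_matrix, ← hAbar, Polynomial.map_mul,
      Polynomial.map_comp, Polynomial.map_comp, hp, hG, map_mul, aeval_comp, aeval_comp,
      hpbar]
    have : (derivative F).map res = derivative Fbar := by
      rw [hFbar, derivative_map]
    rw [this, ← map_mul, mul_comm (derivative Fbar) Gbar, map_mul, hGbar]
    simp
  have hUm : ∀ i j, (U - 1) i j ∈ maximalIdeal O := by
    intro i j
    have h0 : ((U - 1).map res) i j = 0 := by rw [hUred]; rfl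
    rw [Matrix.map_apply] at h0
    exact Ideal.Quotient.eq_zero_iff_mem.mp h0
  have hUC : U * C = C := by
    have : (U - 1) * C = 0 := mul_eq_zero_of_mem _ hm2 _ _ hUm hCm
    rw [sub_mul, one_mul, sub_eq_zero] at this
    exact this
  rw [hstep, hUC, hB₁comp, hC]
  abel
end

section
/- Let O be a local principal ideal ring with maximal ideal m = (π) such that π^{ℓ} = 0 and π^{ℓ-1} ≠ 0 (length ℓ), and let A ∈ M_n(O) be such that its reduction Ā is cyclic over the residue field. Then the null ideal N_A = {F ∈ O[t] : F(A) = 0} is the principal ideal generated by the characteristic polynomial of A. -/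
open IsLocalRing Polynomial

/-!
If `F(A) = 0`, then `R = F mod χ_A` has degree `< n` and `R(A) = 0`, so it suffices to show
`R = 0`. As `O` is a principal ideal ring, the coefficients of `R` generate an ideal `(d)`, and
`R = d • Q` with `deg Q < n`. If `d ≠ 0`, then `d • Q(A) = 0` forces every entry of `Q(A)` to be
a non-unit, so `Q̄(Ā) = 0`; as the minimal polynomial of `Ā` has degree `n`, `Q̄ = 0`. Hence all
coefficients of `R` lie in `d𝔪`, so `d ∈ d𝔪`, and `d = 0` because `1 + 𝔪` consists of units.
-/

theorem Polynomial.exists_eq_C_mul_of_coeff_mem_span_singleton {R : Type*} [CommRing R]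
    {p : R[X]} {d : R} (h : ∀ i, p.coeff i ∈ Ideal.span {d}) :
    ∃ q : R[X], q.degree ≤ p.degree ∧ p = C d * q := by
  choose c hc using fun i => Ideal.mem_span_singleton.1 (h i)
  refine ⟨∑ i ∈ p.support, monomial i (c i), ?_, ?_⟩
  · refine (degree_sum_le _ _).trans (Finset.sup_le fun i hi => ?_)
    exact (degree_monomial_le i (c i)).trans (le_degree_of_mem_supp i hi)
  · ext i
    simp only [coeff_C_mul, finsetSum_coeff, coeff_monomial, Finset.sum_ite_eq', mul_ite, mul_zero]
    split_ifs with hi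
    · exact hc i
    · exact notMem_support_iff.1 hi

namespace Matrix

variable {ι : Type*} [Fintype ι] [DecidableEq ι]

theorem map_aeval {R S : Type*} [CommRing R] [CommRing S] (f : R →+* S)
    (A : Matrix ι ι R) (p : R[X]) :
    (aeval A p).map f = aeval (A.map f) (p.map f) :=
  map_aeval_eq_aeval_map (ψ := f.mapMatrix)
    (by ext; simp [algebraMap_matrix_apply, apply_ite f]) p A

theorem eq_zero_of_aeval_eq_zero_of_minpoly_eq_charpoly {K : Type*} [Field K]
    {B : Matrix ι ι K} (hB : minpoly K B = B.charpoly) {p : K[X]}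
    (hp : p.degree < Fintype.card ι) (hpB : aeval B p = 0) : p = 0 := by
  by_contra hne
  have := minpoly.degree_le_of_ne_zero K B hne hpB
  rw [hB, charpoly_degree_eq_dim] at this
  exact this.not_gt hp

variable {O : Type*} [CommRing O] [IsLocalRing O]

theorem coeff_mem_maximalIdeal_of_smul_aeval_eq_zero {A : Matrix ι ι O}
    (hcyc : minpoly (ResidueField O) (A.map (residue O)) = (A.map (residue O)).charpoly)
    {p : O[X]} (hp : p.degree < Fintype.card ι) {d : O} (hd : d ≠ 0)
    (hdp : d • aeval A p = 0) (i : ℕ) : p.coeff i ∈ maximalIdeal O := by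
  have hentries : (aeval A p).map (residue O) = 0 := by
    ext a b
    have hab : d * aeval A p a b = 0 := congr_fun₂ hdp a b
    exact (residue_eq_zero_iff _).2 fun hu => hd ((hu.mul_left_eq_zero).1 hab)
  have hbar : p.map (residue O) = 0 :=
    eq_zero_of_aeval_eq_zero_of_minpoly_eq_charpoly hcyc (degree_map_le.trans_lt hp)
      (map_aeval (residue O) A p ▸ hentries)
  rw [← residue_eq_zero_iff, ← coeff_map, hbar, coeff_zero]

theorem eq_zero_of_aeval_eq_zero_of_degree_lt [IsPrincipalIdealRing O] {A : Matrix ι ι O}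
    (hcyc : minpoly (ResidueField O) (A.map (residue O)) = (A.map (residue O)).charpoly)
    {p : O[X]} (hp : p.degree < Fintype.card ι) (hpA : aeval A p = 0) : p = 0 := by
  obtain ⟨d, hJ⟩ : ∃ d, Ideal.span (Set.range p.coeff) = Ideal.span {d} :=
    Submodule.IsPrincipal.principal _
  have hcoeff (i : ℕ) : p.coeff i ∈ Ideal.span {d} := hJ ▸ Ideal.subset_span ⟨i, rfl⟩
  obtain ⟨q, hqp, rfl⟩ := exists_eq_C_mul_of_coeff_mem_span_singleton hcoeff
  suffices hd : d = 0 by rw [hd, C_0, zero_mul]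
  by_contra hd
  have hq := coeff_mem_maximalIdeal_of_smul_aeval_eq_zero hcyc (hqp.trans_lt hp) hd
    (by rwa [map_mul, aeval_C, Algebra.algebraMap_eq_smul_one, smul_mul_assoc, one_mul] at hpA)
  have hle : Ideal.span (Set.range (C d * q).coeff) ≤ Ideal.span {d} * maximalIdeal O := by
    rw [Ideal.span_le]
    rintro _ ⟨i, rfl⟩
    exact Ideal.mem_span_singleton_mul.2 ⟨q.coeff i, hq i, (coeff_C_mul q).symm⟩
  obtain ⟨z, hz, hdz⟩ :=
    Ideal.mem_span_singleton_mul.1 (hle (hJ ▸ Ideal.mem_span_singleton_self d))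
  have hunit : IsUnit (1 - z) := isUnit_one_sub_self_of_mem_nonunits z hz
  exact hd (hunit.mul_left_eq_zero.1 (by rw [mul_sub, mul_one, hdz, sub_self]))

end Matrix

theorem stmt_11_general (O : Type*) [CommRing O] [IsLocalRing O] [IsPrincipalIdealRing O]
    (n : ℕ) (A : Matrix (Fin n) (Fin n) O)
    (hcyc : minpoly (ResidueField O) (A.map (residue O)) =
      (A.map (residue O)).charpoly) :
    ∀ F : Polynomial O, aeval A F = 0 ↔ F ∈ Ideal.span {A.charpoly} := by
  intro F
  rw [Ideal.mem_span_singleton, ← modByMonic_eq_zero_iff_dvd A.charpoly_monic]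
  constructor
  · intro hF
    refine Matrix.eq_zero_of_aeval_eq_zero_of_degree_lt hcyc ?_ ?_
    · simpa [A.charpoly_degree_eq_dim] using degree_modByMonic_lt F A.charpoly_monic
    · rwa [aeval_modByMonic_eq_self_of_root A.aeval_self_charpoly]
  · intro hF
    rw [← aeval_modByMonic_eq_self_of_root A.aeval_self_charpoly, hF, map_zero]

theorem stmt_11 (O : Type*) [CommRing O] [IsLocalRing O] [IsPrincipalIdealRing O]
    (π : O) (hπ : Ideal.span {π} = maximalIdeal O)
    (ℓ : ℕ) (hℓ : 1 ≤ ℓ) (hnil : π ^ ℓ = 0) (hlen : π ^ (ℓ - 1) ≠ 0)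
    (n : ℕ) (A : Matrix (Fin n) (Fin n) O)
    (hcyc : minpoly (ResidueField O) (A.map (residue O)) =
      (A.map (residue O)).charpoly) :
    ∀ F : Polynomial O, aeval A F = 0 ↔ F ∈ Ideal.span {A.charpoly} :=
  stmt_11_general O n A hcyc
end

section
/- Let O be a local principal ideal ring with residue field k, and A ∈ M_n(O) with Ā ∈ M_n(k) cyclic. Then the characteristic polynomial χ_A(t) is, up to equality, the unique monic polynomial of minimal degree in O[t] annihilating A: every monic polynomial H ∈ O[t] with H(A) = 0 satisfies deg H ≥ n. -/
open IsLocalRing Polynomial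

theorem stmt_12 (O : Type*) [CommRing O] [IsLocalRing O] [IsPrincipalIdealRing O]
    (n : ℕ) (A : Matrix (Fin n) (Fin n) O)
    (hcyc : minpoly (ResidueField O) (A.map (residue O)) =
      (A.map (residue O)).charpoly) :
    ∀ H : Polynomial O, H.Monic → aeval A H = 0 → n ≤ H.natDegree := by
  intro H hm h0
  set f := residue O
  have hmap : aeval (A.map f) (H.map f) = 0 := by
    have : aeval (A.map f) (H.map f) = (f.mapMatrix : Matrix (Fin n) (Fin n) O →+* _) (aeval A H) := by
      rw [aeval_def, eval₂_map, aeval_def, Polynomial.hom_eval₂]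
      congr 1
      ext x : 1
      ext i j
      by_cases h : i = j <;>
        simp [Matrix.algebraMap_matrix_apply, Matrix.map_apply, h]
    rw [this, h0, map_zero]
  have hmonic : (H.map f).Monic := hm.map f
  have hmin := minpoly.min (ResidueField O) (A.map f) hmonic hmap
  have hdeg : (minpoly (ResidueField O) (A.map f)).natDegree = n := by
    rw [hcyc, Matrix.charpoly_natDegree_eq_dim, Fintype.card_fin]
  calc n = (minpoly (ResidueField O) (A.map f)).natDegree := hdeg.symm
    _ ≤ (H.map f).natDegree := natDegree_le_natDegree hmin
    _ ≤ H.natDegree := natDegree_map_le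
end

section
/- Let O be a local principal ideal ring with maximal ideal m, A ∈ M_n(O) with cyclic reduction Ā. The evaluation map O[t] → M_n(O), t ↦ A, induces an O-algebra isomorphism O[t]/(χ_A(t)) ≅ O[A], where χ_A is the characteristic polynomial of A. -/
/-!
Since `Ā` is cyclic, `1, Ā, …, Ā^(n-1)` are linearly independent over the residue field; over a
local ring a family in a flat module with linearly independent reduction is itself linearly
independent, so no nonzero polynomial of degree `< n` annihilates `A`. Dividing by the monic
`χ_A` then shows that the kernel of evaluation at `A` is `(χ_A)`.
-/

open IsLocalRing Polynomial

theorem IsLocalRing.linearIndependent_of_linearIndependent_residueField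
    {R M N ι : Type*} [CommRing R] [IsLocalRing R] [AddCommGroup M] [Module R M] [Module.Flat R M]
    [AddCommGroup N] [Module R N] [Module (ResidueField R) N] [IsScalarTower R (ResidueField R) N]
    (f : M →ₗ[R] N) {v : ι → M} (h : LinearIndependent (ResidueField R) (f ∘ v)) :
    LinearIndependent R v := by
  refine Module.IsLocalRing.linearIndependent_of_flat v
    (.of_comp (f.liftBaseChange (ResidueField R)) ?_)
  convert h using 1
  ext i
  simp

namespace Polynomial

variable {R S : Type*} [CommRing R] [Ring S] [Algebra R S] {x : S}

theorem eq_zero_of_aeval_eq_zero_of_degree_lt {d : ℕ}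
    (hx : LinearIndependent R fun i : Fin d => x ^ (i : ℕ)) {r : R[X]} (hr : r.degree < d)
    (hrx : aeval x r = 0) : r = 0 := by
  have hsum : ∑ i : Fin d, r.coeff i • x ^ (i : ℕ) = 0 := by
    rw [← hrx, aeval_def, eval₂_eq_sum, ← sum_fin _ (by simp) hr]
    simp only [Algebra.smul_def]
  ext i
  rcases lt_or_ge i d with hi | hi
  · exact Fintype.linearIndependent_iff.mp hx _ hsum ⟨i, hi⟩
  · exact coeff_eq_zero_of_degree_lt (hr.trans_le (by exact_mod_cast hi))

theorem ker_aeval_eq_span_singleton_of_linearIndependent {q : R[X]} (hq : q.Monic)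
    (hqx : aeval x q = 0) (hx : LinearIndependent R fun i : Fin q.natDegree => x ^ (i : ℕ)) :
    RingHom.ker (aeval x) = Ideal.span {q} := by
  refine le_antisymm (fun p hp => ?_) ((Ideal.span_singleton_le_iff_mem _).mpr hqx)
  rw [Ideal.mem_span_singleton, ← modByMonic_eq_zero_iff_dvd hq]
  refine eq_zero_of_aeval_eq_zero_of_degree_lt hx ?_ ?_
  · nontriviality R
    exact (degree_modByMonic_lt p hq).trans_le degree_le_natDegree
  · exact (aeval_modByMonic_eq_self_of_root hqx).trans hp

end Polynomial

theorem Matrix.linearIndependent_pow_of_minpoly_residue {R n : Type*} [CommRing R] [IsLocalRing R]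
    [Fintype n] [DecidableEq n] (A : Matrix n n R) :
    LinearIndependent R fun i : Fin (minpoly (ResidueField R) (A.map (residue R))).natDegree =>
      A ^ (i : ℕ) := by
  refine IsLocalRing.linearIndependent_of_linearIndependent_residueField
    (AlgHom.mapMatrix (Algebra.ofId R (ResidueField R))).toLinearMap ?_
  have h := linearIndependent_pow (K := ResidueField R) (A.map (residue R))
  simp only [← Matrix.map_pow] at h
  exact h

theorem Matrix.ker_aeval_eq_span_charpoly {R n : Type*} [CommRing R] [IsLocalRing R] [Fintype n]
    [DecidableEq n] (A : Matrix n n R)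
    (hcyc : minpoly (ResidueField R) (A.map (residue R)) = (A.map (residue R)).charpoly) :
    RingHom.ker (aeval A) = Ideal.span {A.charpoly} := by
  have hdeg : (minpoly (ResidueField R) (A.map (residue R))).natDegree = A.charpoly.natDegree := by
    rw [hcyc, Matrix.charpoly_map, A.charpoly_monic.natDegree_map]
  have hind := A.linearIndependent_pow_of_minpoly_residue
  rw [hdeg] at hind
  exact ker_aeval_eq_span_singleton_of_linearIndependent A.charpoly_monic A.aeval_self_charpoly hind

theorem stmt_13_general (O : Type*) [CommRing O] [IsLocalRing O]
    (n : ℕ) (A : Matrix (Fin n) (Fin n) O)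
    (hcyc : minpoly (ResidueField O) (A.map (residue O)) =
      (A.map (residue O)).charpoly) :
    ∃ e : (Polynomial O ⧸ Ideal.span {A.charpoly}) ≃ₐ[O]
        (Polynomial.aeval A : Polynomial O →ₐ[O] Matrix (Fin n) (Fin n) O).range,
      ∀ p : Polynomial O,
        (e (Ideal.Quotient.mk (Ideal.span {A.charpoly}) p) :
          Matrix (Fin n) (Fin n) O) = aeval A p := by
  refine ⟨(Ideal.quotientEquivAlgOfEq O (A.ker_aeval_eq_span_charpoly hcyc).symm).trans
    (Ideal.quotientKerEquivRange (R := O) (aeval A)), fun p => ?_⟩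
  rfl

theorem stmt_13 (O : Type*) [CommRing O] [IsLocalRing O] [IsPrincipalIdealRing O]
    (n : ℕ) (A : Matrix (Fin n) (Fin n) O)
    (hcyc : minpoly (ResidueField O) (A.map (residue O)) =
      (A.map (residue O)).charpoly) :
    ∃ e : (Polynomial O ⧸ Ideal.span {A.charpoly}) ≃ₐ[O]
        (Polynomial.aeval A : Polynomial O →ₐ[O] Matrix (Fin n) (Fin n) O).range,
      ∀ p : Polynomial O,
        (e (Ideal.Quotient.mk (Ideal.span {A.charpoly}) p) :
          Matrix (Fin n) (Fin n) O) = aeval A p :=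
  stmt_13_general O n A hcyc
end

section
/- Let p be an odd prime, F ∈ ℤ_p[t] monic, and A ∈ M_n(ℤ_p) with cyclic reduction Ā ∈ M_n(𝔽_p). Suppose B̃ ∈ M_n(𝔽_p) satisfies F̄(B̃) = Ā and F̄'(B̃) ∈ GL_n(𝔽_p). Then there exists B ∈ M_n(ℤ_p) reducing to B̃ mod p with F(B) = A. -/
/-!
Write `Ā` for the reduction of `A` and `χ` for the characteristic polynomial of `A`. Since
`Ā = F̄(B̃)` lies in `𝔽_p[B̃]`, whose dimension is at most `n`, and `𝔽_p[Ā]` has dimension `n`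
because `Ā` is cyclic, the two algebras coincide; in particular `B̃` and `F̄'(B̃)⁻¹` are
polynomials in `Ā`. Consider `R = ℤ_p[X]/(χ)`, which maps to `ℤ_p[A]` by `X ↦ A`. As `χ̄` is the
minimal polynomial of `Ā`, the reduction `R → 𝔽_p[Ā]` has kernel `pR`, so a lift of `B̃` to `R` is
an approximate root of `F(Y) = X` with unit derivative modulo `p`. Being finite over `ℤ_p`, `R` is
`p`-adically complete, hence Henselian, and Hensel's lemma gives an exact root `y ≡ B̃`; then
`B = y(A)`.
-/

open Polynomial Module

namespace Algebra

variable {K S : Type*} [Field K] [Ring S] [Algebra K S]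

theorem toSubmodule_adjoin_singleton_eq_span_pow {x : S} (hx : IsIntegral K x) :
    Subalgebra.toSubmodule (adjoin K {x}) =
      Submodule.span K (Set.range fun i : Fin (minpoly K x).natDegree => x ^ (i : ℕ)) := by
  refine le_antisymm (fun y hy => hx.mem_span_pow ?_) (Submodule.span_le.mpr ?_)
  · rw [Subalgebra.mem_toSubmodule, adjoin_singleton_eq_range_aeval] at hy
    obtain ⟨f, rfl⟩ := hy
    exact ⟨f, rfl⟩
  · rintro _ ⟨i, rfl⟩
    exact (adjoin K {x}).pow_mem (self_mem_adjoin_singleton K x) _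

theorem finrank_adjoin_singleton {x : S} (hx : IsIntegral K x) :
    finrank K (adjoin K {x}) = (minpoly K x).natDegree := by
  change finrank K (Subalgebra.toSubmodule (adjoin K {x})) = _
  rw [toSubmodule_adjoin_singleton_eq_span_pow hx, finrank_span_eq_card (linearIndependent_pow x),
    Fintype.card_fin]

theorem adjoin_singleton_eq_of_natDegree_minpoly_le {x y : S} (hx : IsIntegral K x)
    (hy : IsIntegral K y) (hxy : x ∈ adjoin K {y})
    (hdeg : (minpoly K y).natDegree ≤ (minpoly K x).natDegree) : adjoin K {x} = adjoin K {y} := by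
  have : FiniteDimensional K (adjoin K {y}) := .of_fg hy.fg_adjoin_singleton
  refine Subalgebra.toSubmodule_injective <|
    Submodule.eq_of_le_of_finrank_le (adjoin_le (Set.singleton_subset_iff.mpr hxy)) ?_
  change finrank K (adjoin K {y}) ≤ finrank K (adjoin K {x})
  rwa [finrank_adjoin_singleton hx, finrank_adjoin_singleton hy]

theorem exists_mem_adjoin_singleton_mul_eq_one {u : S} (hi : IsIntegral K u) (hu : IsUnit u) :
    ∃ v ∈ adjoin K {u}, u * v = 1 := by
  let B := adjoin K {u}
  have : Module.Finite K B := finite_adjoin_simple_of_isIntegral hi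
  have : IsArtinianRing B := isArtinian_of_tower K inferInstance
  have hb : (⟨u, self_mem_adjoin_singleton K u⟩ : B) ∈ nonZeroDivisors B :=
    comap_nonZeroDivisors_le_of_injective (f := B.val) Subtype.val_injective hu.mem_nonZeroDivisors
  obtain ⟨v, hv⟩ := (IsArtinianRing.isUnit_of_mem_nonZeroDivisors hb).exists_right_inv
  exact ⟨v, v.2, congrArg Subtype.val hv⟩

end Algebra

namespace Matrix

variable {K ι : Type*} [Field K] [Fintype ι] [DecidableEq ι]

theorem adjoin_eq_of_minpoly_eq_charpoly {M N : Matrix ι ι K}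
    (hM : minpoly K M = M.charpoly) (hMN : M ∈ Algebra.adjoin K {N}) :
    Algebra.adjoin K {M} = Algebra.adjoin K {N} := by
  refine Algebra.adjoin_singleton_eq_of_natDegree_minpoly_le (.of_finite K M) (.of_finite K N)
    hMN ?_
  calc (minpoly K N).natDegree ≤ N.charpoly.natDegree :=
        natDegree_le_of_dvd (minpoly_dvd_charpoly N) N.charpoly_monic.ne_zero
    _ = (minpoly K M).natDegree := by rw [hM, charpoly_natDegree_eq_dim, charpoly_natDegree_eq_dim]

end Matrix

theorem IsPrecomplete.of_finite {R M : Type*} [CommRing R] (I : Ideal R) [IsPrecomplete I R]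
    [AddCommGroup M] [Module R M] [Module.Finite R M] : IsPrecomplete I M := by
  refine AdicCompletion.of_surjective_iff.mp fun x => ?_
  obtain ⟨t, rfl⟩ := AdicCompletion.ofTensorProduct_surjective_of_finite I M x
  induction t using TensorProduct.induction_on with
  | zero => exact ⟨0, by simp⟩
  | tmul r m =>
    obtain ⟨a, rfl⟩ := AdicCompletion.of_surjective I R r
    refine ⟨a • m, ?_⟩
    rw [AdicCompletion.ofTensorProduct_tmul, map_smul, ← algebraMap_smul (AdicCompletion I R) a]
    rfl
  | add t₁ t₂ h₁ h₂ =>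
    obtain ⟨m₁, h₁⟩ := h₁
    obtain ⟨m₂, h₂⟩ := h₂
    exact ⟨m₁ + m₂, by rw [map_add, map_add, h₁, h₂]⟩

theorem IsAdicComplete.of_finite {R M : Type*} [CommRing R] [IsNoetherianRing R] (I : Ideal R)
    [IsAdicComplete I R] [AddCommGroup M] [Module R M] [Module.Finite R M] :
    IsAdicComplete I M where
  toIsHausdorff := .of_le_jacobson I M (IsAdicComplete.le_jacobson_bot I)
  toIsPrecomplete := .of_finite I

theorem HenselianRing.of_finite {R S : Type*} [CommRing R] [IsNoetherianRing R] (I : Ideal R)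
    [IsAdicComplete I R] [CommRing S] [Algebra R S] [Module.Finite R S] :
    HenselianRing S (I.map (algebraMap R S)) :=
  have := (IsAdicComplete.map_algebraMap_iff (I := I) (S := S) (M := S)).mpr (.of_finite I)
  inferInstance

theorem Polynomial.Monic.map_sub_C {R S : Type*} [CommRing R] [CommRing S] [Nontrivial S]
    {F : R[X]} (hF : F.Monic) (hdeg : 0 < F.natDegree) (f : R →+* S) (a : S) :
    (F.map f - C a).Monic :=
  (hF.map f).sub_of_left <| degree_C_le.trans_lt <| by
    rwa [← natDegree_pos_iff_degree_pos, hF.natDegree_map]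

theorem HenselianRing.exists_isRoot_of_map_eq {R M : Type*} [CommRing R] [Ring M] (φ : R →+* M)
    [HenselianRing R (RingHom.ker φ)] {G : R[X]} (hG : G.Monic) {x₀ v : R}
    (h₀ : φ (G.eval x₀) = 0) (hv : φ (G.derivative.eval x₀ * v) = 1) :
    ∃ x, G.IsRoot x ∧ φ x = φ x₀ := by
  have hunit : IsUnit (Ideal.Quotient.mk (RingHom.ker φ) (G.derivative.eval x₀)) := by
    refine .of_mul_eq_one (Ideal.Quotient.mk _ v) ?_
    rw [← map_mul, ← map_one (Ideal.Quotient.mk _), Ideal.Quotient.eq, RingHom.mem_ker, map_sub,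
      hv, map_one, sub_self]
  obtain ⟨x, hx, hxx₀⟩ := HenselianRing.is_henselian G hG x₀ (RingHom.mem_ker.mpr h₀) hunit
  exact ⟨x, hx, sub_eq_zero.mp (by rwa [← map_sub, ← RingHom.mem_ker])⟩

namespace Matrix

variable {O k ι : Type*} [CommRing O] [Field k] [Fintype ι] [DecidableEq ι]

noncomputable def adjoinRootCharpolyEval (A : Matrix ι ι O) :
    AdjoinRoot A.charpoly →ₐ[O] Matrix ι ι O :=
  Ideal.Quotient.liftₐ _ (aeval A) fun q hq => by
    obtain ⟨c, rfl⟩ := Ideal.mem_span_singleton.mp hq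
    rw [map_mul, aeval_self_charpoly, zero_mul]

noncomputable def adjoinRootCharpolyReduce (π : O →+* k) (A : Matrix ι ι O) :
    AdjoinRoot A.charpoly →+* Matrix ι ι k :=
  π.mapMatrix.comp (adjoinRootCharpolyEval A).toRingHom

variable (π : O →+* k) (A : Matrix ι ι O)

theorem adjoinRootCharpolyEval_root : adjoinRootCharpolyEval A (AdjoinRoot.root _) = A :=
  aeval_X A

theorem adjoinRootCharpolyReduce_comp_algebraMap :
    (adjoinRootCharpolyReduce π A).comp (algebraMap O _) = (algebraMap k _).comp π := by
  ext o i j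
  change π (adjoinRootCharpolyEval A (algebraMap O _ o) i j) = algebraMap k (Matrix ι ι k) (π o) i j
  rw [AlgHom.commutes, algebraMap_matrix_apply, algebraMap_matrix_apply, apply_ite π, map_zero]
  rfl

theorem adjoinRootCharpolyReduce_aeval (r : AdjoinRoot A.charpoly) (q : O[X]) :
    adjoinRootCharpolyReduce π A (aeval r q) = aeval (adjoinRootCharpolyReduce π A r) (q.map π) :=
  map_aeval_eq_aeval_map (adjoinRootCharpolyReduce_comp_algebraMap π A).symm q r

theorem adjoinRootCharpolyReduce_root :
    adjoinRootCharpolyReduce π A (AdjoinRoot.root _) = A.map π :=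
  congrArg (·.map π) (adjoinRootCharpolyEval_root A)

theorem adjoinRootCharpolyReduce_aeval_root (q : O[X]) :
    adjoinRootCharpolyReduce π A (aeval (AdjoinRoot.root _) q) = aeval (A.map π) (q.map π) := by
  rw [adjoinRootCharpolyReduce_aeval, adjoinRootCharpolyReduce_root]

theorem exists_adjoinRootCharpolyReduce_eq (hπ : Function.Surjective π) {N : Matrix ι ι k}
    (hN : N ∈ Algebra.adjoin k {A.map π}) : ∃ r, adjoinRootCharpolyReduce π A r = N := by
  rw [Algebra.adjoin_singleton_eq_range_aeval] at hN
  obtain ⟨q', rfl⟩ := hN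
  obtain ⟨q, rfl⟩ := map_surjective π hπ q'
  exact ⟨_, adjoinRootCharpolyReduce_aeval_root π A q⟩

theorem ker_adjoinRootCharpolyReduce (hπ : Function.Surjective π)
    (hA : minpoly k (A.map π) = (A.map π).charpoly) :
    RingHom.ker (adjoinRootCharpolyReduce π A) = (RingHom.ker π).map (algebraMap O _) := by
  refine le_antisymm (fun r hr => ?_) (Ideal.map_le_iff_le_comap.mpr fun o ho => ?_)
  · obtain ⟨q, rfl⟩ := AdjoinRoot.mk_surjective r
    rw [RingHom.mem_ker, ← AdjoinRoot.aeval_eq, adjoinRootCharpolyReduce_aeval_root] at hr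
    obtain ⟨s', hs'⟩ := hA ▸ minpoly.dvd k _ hr
    obtain ⟨s, rfl⟩ := map_surjective π hπ s'
    have hq : q - A.charpoly * s ∈ (RingHom.ker π).map C := by
      rw [← ker_mapRingHom, RingHom.mem_ker, coe_mapRingHom, Polynomial.map_sub,
        Polynomial.map_mul, hs', charpoly_map, sub_self]
    have := Ideal.mem_map_of_mem (AdjoinRoot.mk A.charpoly) hq
    rwa [Ideal.map_map, map_sub, map_mul, AdjoinRoot.mk_self, zero_mul, sub_zero] at this
  · rw [Ideal.mem_comap, RingHom.mem_ker, ← RingHom.comp_apply,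
      adjoinRootCharpolyReduce_comp_algebraMap, RingHom.comp_apply, RingHom.mem_ker.mp ho, map_zero]

theorem exists_map_eq_and_aeval_eq [IsNoetherianRing O] [IsAdicComplete (RingHom.ker π) O]
    (hπ : Function.Surjective π) {F : O[X]} (hF : F.Monic)
    (hA : minpoly k (A.map π) = (A.map π).charpoly) {B₀ : Matrix ι ι k}
    (hB₀ : aeval B₀ (F.map π) = A.map π) (hunit : IsUnit (aeval B₀ (derivative (F.map π)))) :
    ∃ B : Matrix ι ι O, B.map π = B₀ ∧ aeval B F = A := by
  cases isEmpty_or_nonempty ι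
  · exact ⟨0, Subsingleton.elim _ _, Subsingleton.elim _ _⟩
  set φ := adjoinRootCharpolyReduce π A
  have : HenselianRing (AdjoinRoot A.charpoly) (RingHom.ker φ) := by
    have := (AdjoinRoot.powerBasis' A.charpoly_monic).finite
    rw [ker_adjoinRootCharpolyReduce π A hπ hA]
    exact .of_finite _
  have : Nontrivial (AdjoinRoot A.charpoly) := φ.domain_nontrivial
  have hadj := adjoin_eq_of_minpoly_eq_charpoly hA (hB₀ ▸ aeval_mem_adjoin_singleton k B₀)
  obtain ⟨u, hu_mem, hu⟩ := Algebra.exists_mem_adjoin_singleton_mul_eq_one (.of_finite k _) hunit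
  obtain ⟨x₀, hx₀⟩ := exists_adjoinRootCharpolyReduce_eq π A hπ <|
    hadj ▸ Algebra.self_mem_adjoin_singleton k B₀
  obtain ⟨v, hv⟩ := exists_adjoinRootCharpolyReduce_eq π A hπ <| hadj ▸
    Algebra.adjoin_le (Set.singleton_subset_iff.mpr (aeval_mem_adjoin_singleton k B₀)) hu_mem
  have hFdeg : 0 < F.natDegree := by
    refine Nat.pos_of_ne_zero fun h => not_isUnit_zero (M₀ := Matrix ι ι k) ?_
    rwa [hF.natDegree_eq_zero.mp h, Polynomial.map_one, derivative_one, map_zero] at hunit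
  set G := F.map (algebraMap O (AdjoinRoot A.charpoly)) - C (AdjoinRoot.root _)
  have hG : G.Monic := hF.map_sub_C hFdeg _ _
  have hGeval (y) : G.eval y = aeval y F - AdjoinRoot.root _ := by
    rw [eval_sub, eval_map_algebraMap, eval_C]
  have hG'eval (y) : G.derivative.eval y = aeval y (derivative F) := by
    rw [derivative_sub, derivative_C, sub_zero, derivative_map, eval_map_algebraMap]
  obtain ⟨x, hx, hxx₀⟩ := HenselianRing.exists_isRoot_of_map_eq φ hG (x₀ := x₀) (v := v)
    (by rw [hGeval, map_sub, adjoinRootCharpolyReduce_aeval, hx₀, hB₀,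
      adjoinRootCharpolyReduce_root, sub_self])
    (by rw [hG'eval, map_mul, adjoinRootCharpolyReduce_aeval, hx₀, hv, ← derivative_map, hu])
  refine ⟨adjoinRootCharpolyEval A x, hxx₀.trans hx₀, ?_⟩
  rw [aeval_algHom_apply, sub_eq_zero.mp ((hGeval x).symm.trans hx), adjoinRootCharpolyEval_root]

end Matrix

theorem stmt_15_general (p : ℕ) [Fact p.Prime]
    (F : Polynomial ℤ_[p]) (hF : F.Monic)
    (n : ℕ) (A : Matrix (Fin n) (Fin n) ℤ_[p])
    (hcyc : minpoly (ZMod p) (A.map PadicInt.toZMod) =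
      (A.map PadicInt.toZMod).charpoly)
    (Btil : Matrix (Fin n) (Fin n) (ZMod p))
    (hB1 : aeval Btil (F.map PadicInt.toZMod) = A.map PadicInt.toZMod)
    (hB2 : IsUnit (aeval Btil (derivative (F.map PadicInt.toZMod)))) :
    ∃ B : Matrix (Fin n) (Fin n) ℤ_[p],
      B.map PadicInt.toZMod = Btil ∧ aeval B F = A := by
  have : IsAdicComplete (RingHom.ker (PadicInt.toZMod (p := p))) ℤ_[p] := by
    rw [PadicInt.ker_toZMod]
    infer_instance
  exact Matrix.exists_map_eq_and_aeval_eq _ A (ZMod.ringHom_surjective _) hF hcyc hB1 hB2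

theorem stmt_15 (p : ℕ) [Fact p.Prime] (hodd : p ≠ 2)
    (F : Polynomial ℤ_[p]) (hF : F.Monic)
    (n : ℕ) (A : Matrix (Fin n) (Fin n) ℤ_[p])
    (hcyc : minpoly (ZMod p) (A.map PadicInt.toZMod) =
      (A.map PadicInt.toZMod).charpoly)
    (Btil : Matrix (Fin n) (Fin n) (ZMod p))
    (hB1 : aeval Btil (F.map PadicInt.toZMod) = A.map PadicInt.toZMod)
    (hB2 : IsUnit (aeval Btil (derivative (F.map PadicInt.toZMod)))) :
    ∃ B : Matrix (Fin n) (Fin n) ℤ_[p],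
      B.map PadicInt.toZMod = Btil ∧ aeval B F = A :=
  stmt_15_general p F hF n A hcyc Btil hB1 hB2
end
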